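/- For every p > 1 there exist a point (x₀, y₀) ∈ ℝ² and a double sequence {c_{jk}}_{j,k=1}^∞ of real numbers belonging to DGM(p, ₂α, ₂β, ₂γ, 3) with j·k·c_{jk} → 0 as j + k → ∞, such that {c_{jk}} does not belong to DGM(1, ₂α, ₂β, ₂γ, 3), and the double sine series Σ_{j=1}^∞ Σ_{k=1}^∞ c_{jk} sin(jx₀) sin(ky₀) is divergent at (x₀, y₀), i.e., its rectangular partial sums Σ_{j=1}^m Σ_{k=1}^n c_{jk} sin(jx₀) sin(ky₀) do not converge as m, n → ∞. -/

import Mathlib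

noncomputable section

/-- The class `DGM(p, ₂α, ₂β, ₂γ, r)` of double sequences. -/
def DGMclass (p : ℝ) (r : ℕ) (c : ℕ → ℕ → ℂ) : Prop :=
  ∃ (C : ℝ) (lam : ℕ) (b₁ b₂ b₃ : ℕ → ℝ),
    0 < C ∧ 2 ≤ lam ∧
    (∀ l, 0 < b₁ l) ∧ Filter.Tendsto b₁ Filter.atTop Filter.atTop ∧
    (∀ l, 0 < b₂ l) ∧ Filter.Tendsto b₂ Filter.atTop Filter.atTop ∧
    (∀ l, 0 < b₃ l) ∧ Filter.Tendsto b₃ Filter.atTop Filter.atTop ∧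
    (∀ m n : ℕ, lam ≤ m → 1 ≤ n →
      ∃ M : ℕ, b₁ m ≤ M ∧ (M : ℝ) ≤ lam * b₁ m ∧
        (∑ j ∈ Finset.Icc m (2*m-1), ‖c j n - c (j+r) n‖ ^ p) ^ (1/p)
          ≤ C / m * ∑ j ∈ Finset.Icc M (2*M), ‖c j n‖) ∧
    (∀ m n : ℕ, 1 ≤ m → lam ≤ n →
      ∃ N : ℕ, b₂ n ≤ N ∧ (N : ℝ) ≤ lam * b₂ n ∧
        (∑ k ∈ Finset.Icc n (2*n-1), ‖c m k - c m (k+r)‖ ^ p) ^ (1/p)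
          ≤ C / n * ∑ k ∈ Finset.Icc N (2*N), ‖c m k‖) ∧
    (∀ m n : ℕ, lam ≤ m → lam ≤ n → ∀ S : ℝ,
      (∀ M N : ℕ, b₃ (m+n) ≤ (M : ℝ) + N →
        ∑ j ∈ Finset.Icc M (2*M), ∑ k ∈ Finset.Icc N (2*N), ‖c j k‖ ≤ S) →
      (∑ j ∈ Finset.Icc m (2*m-1), ∑ k ∈ Finset.Icc n (2*n-1),
          ‖c j k - c (j+r) k - c j (k+r) + c (j+r) (k+r)‖ ^ p) ^ (1/p)
        ≤ C / ((m : ℝ) * n) * S)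

open Finset Filter Real

namespace DGMaux

def Sf (s : ℕ) : ℕ := 32 * 256 ^ (s - 1)
def Ef (s : ℕ) : ℕ := 256 ^ s + 3 * Sf s + 6
def Gf (θ : ℝ) (s : ℕ) : ℕ := ⌈(2:ℝ) ^ (θ * s)⌉₊
def hf (s : ℕ) : ℝ := 8 / (s * 256 ^ s)
def gf (s : ℕ) : ℝ := 1 / 512 ^ s

def aa (θ : ℝ) (j : ℕ) : ℝ :=
  let s := Nat.log 256 j
  if 1 ≤ s ∧ 256 ^ s ≤ j ∧ j < 256 ^ s + 3 * Sf s ∧ (j - 256 ^ s) % 3 = 0 then hf s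
  else if 1 ≤ s ∧ Ef s ≤ j ∧ j < Ef s + 6 * Gf θ s ∧ (j - Ef s) % 6 = 0 then gf s
  else 0

variable {θ p : ℝ} {s u j : ℕ}

lemma pow256 (hs : 1 ≤ s) : 256 ^ s = 256 * 256 ^ (s - 1) := by
  conv_lhs => rw [show s = (s-1) + 1 by omega]
  ring

lemma Gf_pos : 1 ≤ Gf θ s := by
  have : (0:ℝ) < 2 ^ (θ * s) := rpow_pos_of_pos (by norm_num) _
  exact Nat.one_le_iff_ne_zero.2 (by simp [Gf, Nat.ceil_eq_zero, not_le, this])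

lemma Gf_le_real (hθ : θ ≤ 3) : (Gf θ s : ℝ) ≤ (8:ℝ) ^ s + 1 := by
  have h1 : (2:ℝ) ^ (θ * s) ≤ (8:ℝ) ^ s := by
    calc (2:ℝ) ^ (θ * s) ≤ (2:ℝ) ^ ((3:ℝ) * s) :=
          rpow_le_rpow_of_exponent_le one_le_two
            (mul_le_mul_of_nonneg_right hθ (Nat.cast_nonneg s))
      _ = (8:ℝ) ^ s := by
          rw [show ((3:ℝ) * s) = ((3 * s : ℕ) : ℝ) by push_cast; ring, rpow_natCast,
            pow_mul]; norm_num
  calc (Gf θ s : ℝ) ≤ (2:ℝ) ^ (θ * s) + 1 :=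
        le_of_lt (Nat.ceil_lt_add_one (by positivity))
    _ ≤ (8:ℝ) ^ s + 1 := by linarith

lemma Gf_le (hθ : θ ≤ 3) : Gf θ s ≤ 8 ^ s + 1 := by
  have h := Gf_le_real (θ := θ) (s := s) hθ
  have : ((Gf θ s : ℝ)) ≤ ((8 ^ s + 1 : ℕ) : ℝ) := by push_cast; linarith
  exact_mod_cast this

lemma Gf_ge : (2:ℝ) ^ (θ * s) ≤ Gf θ s := Nat.le_ceil _

/-- room: everything of block `s` fits well inside `[256^s, 2*256^s - 10]`. -/
lemma room (hθ : θ ≤ 3) (hs : 1 ≤ s) : Ef s + 6 * Gf θ s ≤ 2 * 256 ^ s - 10 := by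
  have h8 : (8:ℕ) ^ s ≤ 8 * 256 ^ (s-1) := by
    calc (8:ℕ) ^ s = 8 * 8 ^ (s-1) := by
          conv_lhs => rw [show s = (s-1)+1 by omega]
          ring
      _ ≤ 8 * 256 ^ (s-1) := by
          gcongr <;> norm_num
  have hG := Gf_le (θ := θ) (s := s) hθ
  have h256 := pow256 hs
  have hp1 : 1 ≤ 256 ^ (s-1) := Nat.one_le_pow _ _ (by norm_num)
  unfold Ef Sf
  omega


lemma log_eq (hs : 1 ≤ s) (h1 : 256 ^ s ≤ j) (h2 : j < 2 * 256 ^ s) :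
    Nat.log 256 j = s := by
  apply Nat.log_eq_of_pow_le_of_lt_pow h1
  calc j < 2 * 256 ^ s := h2
    _ ≤ 256 ^ (s+1) := by rw [pow_succ]; omega

lemma plateau_lt (hs : 1 ≤ s) : 256 ^ s + 3 * Sf s < 2 * 256 ^ s := by
  have := pow256 hs
  have hp1 : 1 ≤ 256 ^ (s-1) := Nat.one_le_pow _ _ (by norm_num)
  unfold Sf; omega

lemma E1 (hs : 1 ≤ s) (hu : u < Sf s) : aa θ (256 ^ s + 3 * u) = hf s := by
  have hlt : 256 ^ s + 3 * u < 256 ^ s + 3 * Sf s := by omega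
  have hlog : Nat.log 256 (256 ^ s + 3 * u) = s :=
    log_eq hs (by omega) (hlt.trans (plateau_lt hs))
  unfold aa
  simp only [hlog]
  rw [if_pos ⟨hs, by omega, hlt, by omega⟩]

lemma E2 (hθ : θ ≤ 3) (hs : 1 ≤ s) (hu : u < Gf θ s) : aa θ (Ef s + 6 * u) = gf s := by
  have hr := room (θ := θ) hθ hs
  have h2 : Ef s + 6 * u < 2 * 256 ^ s := by omega
  have hE : 256 ^ s ≤ Ef s := by unfold Ef; omega
  have hlog : Nat.log 256 (Ef s + 6 * u) = s := log_eq hs (by omega) h2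
  unfold aa
  simp only [hlog]
  rw [if_neg, if_pos ⟨hs, by omega, by omega, by omega⟩]
  have : 256 ^ s + 3 * Sf s < Ef s := by unfold Ef; omega
  rintro ⟨-, -, h, -⟩; omega

lemma E3 (hne : aa θ j ≠ 0) :
    ∃ s, 1 ≤ s ∧
      ((∃ u, u < Sf s ∧ j = 256 ^ s + 3 * u ∧ aa θ j = hf s) ∨
       (∃ u, u < Gf θ s ∧ j = Ef s + 6 * u ∧ aa θ j = gf s)) := by
  unfold aa at hne ⊢
  set s := Nat.log 256 j with hsdef
  by_cases h1 : 1 ≤ s ∧ 256 ^ s ≤ j ∧ j < 256 ^ s + 3 * Sf s ∧ (j - 256 ^ s) % 3 = 0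
  · refine ⟨s, h1.1, Or.inl ⟨(j - 256 ^ s)/3, by omega, by omega, ?_⟩⟩
    simp only [← hsdef]; rw [if_pos h1]
  · rw [if_neg h1] at hne
    by_cases h2 : 1 ≤ s ∧ Ef s ≤ j ∧ j < Ef s + 6 * Gf θ s ∧ (j - Ef s) % 6 = 0
    · refine ⟨s, h2.1, Or.inr ⟨(j - Ef s)/6, by omega, by omega, ?_⟩⟩
      simp only [← hsdef]; rw [if_neg h1, if_pos h2]
    · rw [if_neg h2] at hne; exact absurd rfl hne

lemma hf_pos (hs : 1 ≤ s) : 0 < hf s := by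
  have : (0:ℝ) < s := by exact_mod_cast hs
  unfold hf; positivity

lemma gf_pos : 0 < gf s := by unfold gf; positivity

lemma aa_nonneg : 0 ≤ aa θ j := by
  unfold aa
  simp only []
  split
  · next h => exact le_of_lt (hf_pos h.1)
  · split
    · exact le_of_lt gf_pos
    · exact le_rfl

lemma range_of_ne (hθ : θ ≤ 3) (hne : aa θ j ≠ 0) :
    ∃ s, 1 ≤ s ∧ 256 ^ s ≤ j ∧ j < 2 * 256 ^ s ∧ j % 3 = 1 ∧ aa θ j ≤ hf s := by
  obtain ⟨s, hs, hc⟩ := E3 hne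
  have hmod : 256 ^ s % 3 = 1 := by
    rw [Nat.pow_mod]; norm_num
  have hgh : gf s ≤ hf s := by
    unfold gf hf
    rw [div_le_div_iff₀ (by positivity) (by positivity)]
    have h1 : (s:ℝ) ≤ 2 ^ s := by exact_mod_cast (Nat.lt_two_pow_self (n := s)).le
    have h2 : (512:ℝ) ^ s = 2 ^ s * 256 ^ s := by
      rw [← mul_pow]; norm_num
    have h3 : (0:ℝ) < 256 ^ s := by positivity
    calc (1:ℝ) * ((s:ℝ) * 256 ^ s) ≤ 2 ^ s * 256 ^ s := by
          rw [one_mul]; exact mul_le_mul_of_nonneg_right h1 h3.le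
      _ ≤ 8 * 512 ^ s := by rw [h2]; nlinarith [h3, pow_pos (by norm_num : (0:ℝ)<2) s]
  rcases hc with ⟨u, hu, rfl, hv⟩ | ⟨u, hu, rfl, hv⟩
  · exact ⟨s, hs, by omega, by have := plateau_lt hs; omega, by omega, le_of_eq hv⟩
  · have hr := room (θ := θ) hθ hs
    have hE : 256 ^ s ≤ Ef s := by unfold Ef; omega
    have hEm : Ef s % 3 = 0 % 3 + 1 := by unfold Ef Sf; omega
    exact ⟨s, hs, by omega, by omega, by omega, hv ▸ hgh⟩

lemma aa_le (hθ : θ ≤ 3) (hj : 1 ≤ j) : aa θ j ≤ 16 / j := by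
  by_cases hne : aa θ j = 0
  · rw [hne]; positivity
  · obtain ⟨s, hs, h1, h2, -, h3⟩ := range_of_ne hθ hne
    have hsr : (1:ℝ) ≤ (s:ℝ) := by exact_mod_cast hs
    have hjr : (j:ℝ) < 2 * 256 ^ s := by exact_mod_cast h2
    have hjp : (0:ℝ) < j := by exact_mod_cast hj
    have h256 : (0:ℝ) < (256:ℝ) ^ s := by positivity
    calc aa θ j ≤ hf s := h3
      _ = 8 / ((s:ℝ) * 256 ^ s) := rfl
      _ ≤ 8 / (256:ℝ) ^ s := by
          apply div_le_div_of_nonneg_left (by norm_num) h256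
          nlinarith
      _ ≤ 16 / j := by
          rw [div_le_div_iff₀ h256 hjp]
          nlinarith

lemma window_le (hθ : θ ≤ 3) {M : ℕ} (hM : 1 ≤ M) :
    ∑ j ∈ Finset.Icc M (2*M), aa θ j ≤ 33 := by
  have hMr : (1:ℝ) ≤ (M:ℝ) := by exact_mod_cast hM
  calc ∑ j ∈ Finset.Icc M (2*M), aa θ j ≤ ∑ j ∈ Finset.Icc M (2*M), 16 / (M:ℝ) := by
        apply Finset.sum_le_sum
        intro j hj
        simp only [Finset.mem_Icc] at hj
        have hj1 : 1 ≤ j := le_trans hM hj.1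
        refine (aa_le hθ hj1).trans ?_
        apply div_le_div_of_nonneg_left (by norm_num) (by positivity)
        exact_mod_cast hj.1
    _ = ((M:ℝ) + 1) * (16 / (M:ℝ)) := by
        rw [Finset.sum_const, Nat.card_Icc, nsmul_eq_mul]
        congr 1
        have h : 2*M+1-M = M+1 := by omega
        rw [h]; push_cast; ring
    _ ≤ 33 := by
        have hMp : (0:ℝ) < M := by linarith
        rw [mul_div_assoc', div_le_iff₀ hMp]
        linarith


/-- block membership range, from `E3` forms -/
lemma form_range (hθ : θ ≤ 3) (hs : 1 ≤ s)
    (hc : (∃ u, u < Sf s ∧ j = 256 ^ s + 3 * u) ∨ (∃ u, u < Gf θ s ∧ j = Ef s + 6 * u)) :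
    256 ^ s ≤ j ∧ j < 2 * 256 ^ s := by
  rcases hc with ⟨u, hu, rfl⟩ | ⟨u, hu, rfl⟩
  · exact ⟨by omega, by have := plateau_lt hs; omega⟩
  · have hr := room (θ := θ) hθ hs
    have hE : 256 ^ s ≤ Ef s := by unfold Ef; omega
    exact ⟨by omega, by omega⟩

lemma block_eq (hθ : θ ≤ 3) (hne : aa θ j ≠ 0) (hs : 1 ≤ s)
    (h1 : 256 ^ s ≤ j) (h2 : j < 2 * 256 ^ s) :
    (∃ u, u < Sf s ∧ j = 256 ^ s + 3 * u ∧ aa θ j = hf s) ∨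
    (∃ u, u < Gf θ s ∧ j = Ef s + 6 * u ∧ aa θ j = gf s) := by
  obtain ⟨t, ht, hc⟩ := E3 hne
  have hrange := form_range (θ := θ) hθ ht
    (by rcases hc with ⟨u,hu,h,-⟩|⟨u,hu,h,-⟩; exacts [Or.inl ⟨u,hu,h⟩, Or.inr ⟨u,hu,h⟩])
  have : t = s := by
    have e1 : Nat.log 256 j = t := log_eq ht hrange.1 hrange.2
    have e2 : Nat.log 256 j = s := log_eq hs h1 h2
    omega
  subst this
  exact hc

lemma aa_eq_zero_of_range (hθ : θ ≤ 3) (hs : 1 ≤ s)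
    (h1 : 256 ^ s ≤ j) (h2 : j < 2 * 256 ^ s)
    (hnot : ∀ u, u < Sf s → j ≠ 256 ^ s + 3 * u)
    (hnot2 : ∀ u, u < Gf θ s → j ≠ Ef s + 6 * u) : aa θ j = 0 := by
  by_contra hne
  rcases block_eq hθ hne hs h1 h2 with ⟨u, hu, h, -⟩ | ⟨u, hu, h, -⟩
  · exact hnot u hu h
  · exact hnot2 u hu h

/-- the jump set of block `s` -/
def Jset (θ : ℝ) (s : ℕ) : Finset ℕ :=
  ({256 ^ s - 3, 256 ^ s + 3 * Sf s - 3} : Finset ℕ) ∪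
    (Finset.range (Gf θ s)).image (fun u => Ef s + 6 * u) ∪
    (Finset.range (Gf θ s)).image (fun u => Ef s + 6 * u - 3)

lemma Jset_loc (hθ : θ ≤ 3) (hs : 1 ≤ s) (hj : j ∈ Jset θ s) :
    256 ^ s - 3 ≤ j ∧ j ≤ 2 * 256 ^ s - 10 := by
  have hr := room (θ := θ) hθ hs
  have hE : 256 ^ s + 3 * Sf s + 6 = Ef s := rfl
  have hG : 1 ≤ Gf θ s := Gf_pos
  have hpl := plateau_lt hs
  simp only [Jset, Finset.mem_union, Finset.mem_insert, Finset.mem_singleton,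
    Finset.mem_image, Finset.mem_range] at hj
  have h4 : 4 ≤ 256 ^ s := by
    calc 4 ≤ 256 ^ 1 := by norm_num
    _ ≤ 256 ^ s := Nat.pow_le_pow_right (by norm_num) hs
  rcases hj with ((rfl | rfl) | ⟨u, hu, rfl⟩) | ⟨u, hu, rfl⟩ <;> omega

/-- any jump of `aa` lies in some `Jset s` -/
lemma jump_mem (hθ : θ ≤ 3) (hne : aa θ j ≠ aa θ (j + 3)) :
    ∃ s, 1 ≤ s ∧ j ∈ Jset θ s := by
  by_cases hj : aa θ j ≠ 0
  · obtain ⟨s, hs, hc⟩ := E3 hj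
    refine ⟨s, hs, ?_⟩
    rcases hc with ⟨u, hu, rfl, hv⟩ | ⟨u, hu, rfl, hv⟩
    · -- plateau point: must be the last one
      by_cases hlast : u + 1 < Sf s
      · exfalso
        have : aa θ (256 ^ s + 3 * u + 3) = hf s := by
          have := E1 (θ := θ) hs hlast
          rw [show 256 ^ s + 3 * (u+1) = 256 ^ s + 3*u + 3 by ring] at this
          exact this
        rw [hv, this] at hne; exact hne rfl
      · have : u = Sf s - 1 := by omega
        subst this
        simp only [Jset, Finset.mem_union, Finset.mem_insert, Finset.mem_singleton]
        have hSf : 1 ≤ Sf s := by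
          have := Nat.one_le_pow (s-1) 256 (by norm_num)
          unfold Sf; omega
        have hA : 1 ≤ 256 ^ s := Nat.one_le_pow _ _ (by norm_num)
        left; left; right; omega
    · simp only [Jset, Finset.mem_union, Finset.mem_image, Finset.mem_range]
      exact Or.inl (Or.inr ⟨u, hu, rfl⟩)
  · push_neg at hj
    rw [hj] at hne
    have hj3 : aa θ (j + 3) ≠ 0 := fun h => hne h.symm
    obtain ⟨s, hs, hc⟩ := E3 hj3
    refine ⟨s, hs, ?_⟩
    rcases hc with ⟨u, hu, he, hv⟩ | ⟨u, hu, he, hv⟩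
    · by_cases hu0 : u = 0
      · subst hu0
        simp only [Jset, Finset.mem_union, Finset.mem_insert]
        left; left; left; omega
      · exfalso
        have h1 : j = 256 ^ s + 3 * (u - 1) := by omega
        have : aa θ j = hf s := h1 ▸ E1 hs (by omega)
        rw [this] at hj
        exact absurd hj (ne_of_gt (hf_pos hs))
    · simp only [Jset, Finset.mem_union, Finset.mem_image, Finset.mem_range]
      have hE6 : 6 ≤ Ef s := Nat.le_add_left 6 _
      exact Or.inr ⟨u, hu, by omega⟩


lemma sum_union_le {A B : Finset ℕ} {f : ℕ → ℝ} (hf : ∀ j, 0 ≤ f j) :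
    ∑ j ∈ A ∪ B, f j ≤ ∑ j ∈ A, f j + ∑ j ∈ B, f j := by
  rw [← Finset.sum_union_inter]
  have : 0 ≤ ∑ j ∈ A ∩ B, f j := Finset.sum_nonneg fun j _ => hf j
  linarith

lemma aa_pre_zero (hθ : θ ≤ 3) (hs : 1 ≤ s) : aa θ (256 ^ s - 3) = 0 := by
  by_contra hne
  obtain ⟨t, ht, hc⟩ := E3 hne
  have hrange := form_range (θ := θ) hθ ht
    (by rcases hc with ⟨u,hu,h,-⟩|⟨u,hu,h,-⟩; exacts [Or.inl ⟨u,hu,h⟩, Or.inr ⟨u,hu,h⟩])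
  have hA : 256 ≤ 256 ^ s := by
    calc (256:ℕ) = 256 ^ 1 := (pow_one _).symm
    _ ≤ 256 ^ s := Nat.pow_le_pow_right (by norm_num) hs
  rcases le_or_gt s t with h | h
  · have : 256 ^ s ≤ 256 ^ t := Nat.pow_le_pow_right (by norm_num) h
    omega
  · have h1 : 256 ^ t ≤ 256 ^ (s-1) := Nat.pow_le_pow_right (by norm_num) (by omega)
    have h2 : 256 ^ s = 256 * 256 ^ (s-1) := pow256 hs
    have h3 : 1 ≤ 256 ^ (s-1) := Nat.one_le_pow _ _ (by norm_num)
    omega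

lemma aa_plateau_end_zero (hθ : θ ≤ 3) (hs : 1 ≤ s) : aa θ (256 ^ s + 3 * Sf s) = 0 := by
  have hpl := plateau_lt hs
  have hE : Ef s = 256 ^ s + 3 * Sf s + 6 := rfl
  apply aa_eq_zero_of_range hθ hs (by omega) (by omega)
  · intro u hu h; omega
  · intro u hu h; omega

lemma aa_dset_succ_zero (hθ : θ ≤ 3) (hs : 1 ≤ s) (hu : u < Gf θ s) :
    aa θ (Ef s + 6 * u + 3) = 0 := by
  have hr := room (θ := θ) hθ hs
  have hE : Ef s = 256 ^ s + 3 * Sf s + 6 := rfl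
  apply aa_eq_zero_of_range hθ hs (by omega) (by omega)
  · intro u' hu' h; omega
  · intro u' hu' h; omega

lemma aa_dset_pre_zero (hθ : θ ≤ 3) (hs : 1 ≤ s) (hu : u < Gf θ s) :
    aa θ (Ef s + 6 * u - 3) = 0 := by
  have hr := room (θ := θ) hθ hs
  have hE : Ef s = 256 ^ s + 3 * Sf s + 6 := rfl
  have hA : 1 ≤ 256 ^ s := Nat.one_le_pow _ _ (by norm_num)
  apply aa_eq_zero_of_range hθ hs (by omega) (by omega)
  · intro u' hu' h; omega
  · intro u' hu' h; omega

lemma sum_Jset_le (hθ : θ ≤ 3) (hp : 0 < p) (hs : 1 ≤ s) :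
    ∑ j ∈ Jset θ s, |aa θ j - aa θ (j + 3)| ^ p
      ≤ 2 * hf s ^ p + 2 * (Gf θ s : ℝ) * gf s ^ p := by
  have hfnn : ∀ j, (0:ℝ) ≤ |aa θ j - aa θ (j+3)| ^ p := fun j => rpow_nonneg (abs_nonneg _) _
  have hA : 256 ≤ 256 ^ s := by
    calc (256:ℕ) = 256 ^ 1 := (pow_one _).symm
    _ ≤ 256 ^ s := Nat.pow_le_pow_right (by norm_num) hs
  have hSf : 1 ≤ Sf s := by
    have := Nat.one_le_pow (s-1) 256 (by norm_num)
    unfold Sf; omega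
  have hE : Ef s = 256 ^ s + 3 * Sf s + 6 := rfl
  unfold Jset
  refine le_trans (sum_union_le hfnn) ?_
  have hpiece2 : ∑ j ∈ (Finset.range (Gf θ s)).image (fun u => Ef s + 6 * u - 3),
      |aa θ j - aa θ (j + 3)| ^ p ≤ (Gf θ s : ℝ) * gf s ^ p := by
    rw [Finset.sum_image (by intro a _ b _ h; beta_reduce at h; omega)]
    have : ∀ u ∈ Finset.range (Gf θ s),
        |aa θ (Ef s + 6 * u - 3) - aa θ (Ef s + 6 * u - 3 + 3)| ^ p = gf s ^ p := by
      intro u hu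
      rw [Finset.mem_range] at hu
      rw [aa_dset_pre_zero hθ hs hu, show Ef s + 6*u - 3 + 3 = Ef s + 6*u by omega,
        E2 hθ hs hu]
      rw [zero_sub, abs_neg, abs_of_nonneg (le_of_lt gf_pos)]
    rw [Finset.sum_congr rfl this, Finset.sum_const, Finset.card_range, nsmul_eq_mul]
  have hpiece1 : ∑ j ∈ (Finset.range (Gf θ s)).image (fun u => Ef s + 6 * u),
      |aa θ j - aa θ (j + 3)| ^ p ≤ (Gf θ s : ℝ) * gf s ^ p := by
    rw [Finset.sum_image (by intro a _ b _ h; beta_reduce at h; omega)]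
    have : ∀ u ∈ Finset.range (Gf θ s),
        |aa θ (Ef s + 6 * u) - aa θ (Ef s + 6 * u + 3)| ^ p = gf s ^ p := by
      intro u hu
      rw [Finset.mem_range] at hu
      rw [E2 hθ hs hu, aa_dset_succ_zero hθ hs hu, sub_zero,
        abs_of_nonneg (le_of_lt gf_pos)]
    rw [Finset.sum_congr rfl this, Finset.sum_const, Finset.card_range, nsmul_eq_mul]
  have hpair : ∑ j ∈ ({256 ^ s - 3, 256 ^ s + 3 * Sf s - 3} : Finset ℕ),
      |aa θ j - aa θ (j + 3)| ^ p ≤ 2 * hf s ^ p := by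
    rw [Finset.sum_pair (by omega)]
    have e1 : |aa θ (256 ^ s - 3) - aa θ (256 ^ s - 3 + 3)| ^ p = hf s ^ p := by
      rw [aa_pre_zero hθ hs, show 256 ^ s - 3 + 3 = 256 ^ s + 3 * 0 by omega,
        E1 hs (by omega), zero_sub, abs_neg, abs_of_nonneg (le_of_lt (hf_pos hs))]
    have e2 : |aa θ (256 ^ s + 3 * Sf s - 3) - aa θ (256 ^ s + 3 * Sf s - 3 + 3)| ^ p
        = hf s ^ p := by
      rw [show 256 ^ s + 3 * Sf s - 3 = 256 ^ s + 3 * (Sf s - 1) by omega,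
        E1 hs (by omega), show 256 ^ s + 3 * (Sf s - 1) + 3 = 256 ^ s + 3 * Sf s by omega,
        aa_plateau_end_zero hθ hs, sub_zero, abs_of_nonneg (le_of_lt (hf_pos hs))]
    rw [e1, e2]; linarith
  refine le_trans (add_le_add (le_trans (sum_union_le hfnn)
    (add_le_add hpair hpiece1)) hpiece2) ?_
  linarith

lemma block_unique {t m : ℕ} (hs : 1 ≤ s) (ht : 1 ≤ t)
    (h1 : 256 ^ s ≤ 2 * m + 2) (h2 : m ≤ 2 * 256 ^ s)
    (h3 : 256 ^ t ≤ 2 * m + 2) (h4 : m ≤ 2 * 256 ^ t) : s = t := by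
  rcases lt_trichotomy s t with h | h | h
  · have k1 : 256 * 256 ^ s ≤ 256 ^ t := by
      calc 256 * 256 ^ s = 256 ^ (s+1) := by ring
      _ ≤ 256 ^ t := Nat.pow_le_pow_right (by norm_num) (by omega)
    have : 1 ≤ 256 ^ s := Nat.one_le_pow _ _ (by norm_num)
    omega
  · exact h
  · have k1 : 256 * 256 ^ t ≤ 256 ^ s := by
      calc 256 * 256 ^ t = 256 ^ (t+1) := by ring
      _ ≤ 256 ^ s := Nat.pow_le_pow_right (by norm_num) (by omega)
    have : 1 ≤ 256 ^ t := Nat.one_le_pow _ _ (by norm_num)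
    omega

lemma plateau_sum_le (hθ : θ ≤ 3) (hs : 1 ≤ s) :
    (1:ℝ)/s ≤ ∑ j ∈ Finset.Icc (256 ^ s) (2 * 256 ^ s), aa θ j := by
  have hpl := plateau_lt hs
  have hsub : (Finset.range (Sf s)).image (fun u => 256 ^ s + 3 * u)
      ⊆ Finset.Icc (256 ^ s) (2 * 256 ^ s) := by
    intro j hj
    simp only [Finset.mem_image, Finset.mem_range] at hj
    obtain ⟨u, hu, rfl⟩ := hj
    simp only [Finset.mem_Icc]
    omega
  calc (1:ℝ)/s = ∑ j ∈ (Finset.range (Sf s)).image (fun u => 256 ^ s + 3 * u), aa θ j := by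
        rw [Finset.sum_image (by intro a _ b _ h; beta_reduce at h; omega)]
        have : ∀ u ∈ Finset.range (Sf s), aa θ (256 ^ s + 3 * u) = hf s := fun u hu =>
          E1 hs (Finset.mem_range.mp hu)
        rw [Finset.sum_congr rfl this, Finset.sum_const, Finset.card_range, nsmul_eq_mul]
        unfold Sf hf
        have h2 : (256:ℝ) ^ s = 256 * 256 ^ (s-1) := by exact_mod_cast pow256 hs
        have h3 : (0:ℝ) < 256 ^ (s-1) := by positivity
        have h4 : (0:ℝ) < s := by exact_mod_cast hs
        push_cast
        rw [h2]
        field_simp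
        ring
    _ ≤ _ := Finset.sum_le_sum_of_subset_of_nonneg hsub (fun j _ _ => aa_nonneg)


lemma sum_Icc_le_sum_Jset (hθ : θ ≤ 3) (hp : 0 < p) {m j₀ : ℕ} (hs : 1 ≤ s)
    (hj₀Icc : j₀ ∈ Finset.Icc m (2*m-1)) (hj₀J : j₀ ∈ Jset θ s) :
    ∑ j ∈ Finset.Icc m (2*m-1), |aa θ j - aa θ (j+3)| ^ p
      ≤ ∑ j ∈ Jset θ s, |aa θ j - aa θ (j+3)| ^ p := by
  have hsum : ∑ j ∈ Finset.Icc m (2*m-1), |aa θ j - aa θ (j+3)| ^ p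
      = ∑ j ∈ (Finset.Icc m (2*m-1)).filter (fun j => aa θ j ≠ aa θ (j+3)),
          |aa θ j - aa θ (j+3)| ^ p := by
    refine (Finset.sum_filter_of_ne ?_).symm
    intro x _ hx h
    rw [h, sub_self, abs_zero, Real.zero_rpow (ne_of_gt hp)] at hx
    exact hx rfl
  rw [hsum]
  apply Finset.sum_le_sum_of_subset_of_nonneg
  · intro j hj
    simp only [Finset.mem_filter, Finset.mem_Icc] at hj
    obtain ⟨⟨hj1, hj2⟩, hjne⟩ := hj
    obtain ⟨t, ht, hjt⟩ := jump_mem hθ hjne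
    have loc1 := Jset_loc hθ ht hjt
    have loc2 := Jset_loc hθ hs hj₀J
    simp only [Finset.mem_Icc] at hj₀Icc
    have h4t : 4 ≤ 256 ^ t := by
      calc 4 ≤ 256 ^ 1 := by norm_num
      _ ≤ 256 ^ t := Nat.pow_le_pow_right (by norm_num) ht
    have h4s : 4 ≤ 256 ^ s := by
      calc 4 ≤ 256 ^ 1 := by norm_num
      _ ≤ 256 ^ s := Nat.pow_le_pow_right (by norm_num) hs
    have g1 : 256 ^ s ≤ 2*m+2 := by omega
    have g2 : m ≤ 2 * 256 ^ s := by omega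
    have g3 : 256 ^ t ≤ 2*m+2 := by omega
    have g4 : m ≤ 2 * 256 ^ t := by omega
    have : s = t := block_unique hs ht g1 g2 g3 g4
    rwa [this]
  · intro j _ _
    exact rpow_nonneg (abs_nonneg _) _

lemma sin_mod_three {j : ℕ} (h : j % 3 = 1) :
    Real.sin (j * (2 * Real.pi / 3)) = Real.sqrt 3 / 2 := by
  obtain ⟨v, hv⟩ : ∃ v, j = 3 * v + 1 := ⟨j / 3, by omega⟩
  subst hv
  have : ((3 * v + 1 : ℕ) : ℝ) * (2 * Real.pi / 3) = 2 * Real.pi / 3 + (v : ℤ) * (2 * Real.pi) := by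
    push_cast; ring
  rw [this, Real.sin_add_int_mul_two_pi]
  rw [show 2 * Real.pi / 3 = Real.pi - Real.pi / 3 by ring, Real.sin_pi_sub,
    Real.sin_pi_div_three]

lemma term_nonneg (hθ : θ ≤ 3) : 0 ≤ aa θ j * Real.sin (j * (2 * Real.pi / 3)) := by
  by_cases hne : aa θ j = 0
  · rw [hne, zero_mul]
  · obtain ⟨s, hs, -, -, hmod, -⟩ := range_of_ne hθ hne
    rw [sin_mod_three hmod]
    have h3 : (0:ℝ) ≤ Real.sqrt 3 / 2 := by positivity
    exact mul_nonneg aa_nonneg h3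

lemma mod3_one (hs : 1 ≤ s) (hu : u < Sf s) : (256 ^ s + 3 * u) % 3 = 1 := by
  have hmod : 256 ^ s % 3 = 1 := by rw [Nat.pow_mod]; norm_num
  omega

lemma Usum_ge (hθ : θ ≤ 3) {S : ℕ} (hS : 1 ≤ S) :
    Real.sqrt 3 / 2 * ∑ t ∈ Finset.Icc 1 S, (1:ℝ)/t
      ≤ ∑ j ∈ Finset.Icc 1 (2 * 256 ^ S), aa θ j * Real.sin (j * (2 * Real.pi / 3)) := by
  classical
  set f : ℕ → ℝ := fun j => aa θ j * Real.sin (j * (2 * Real.pi / 3)) with hf_def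
  set PL : ℕ → Finset ℕ := fun t => (Finset.range (Sf t)).image (fun u => 256 ^ t + 3 * u)
    with hPL
  have hmemPL : ∀ t, 1 ≤ t → ∀ j ∈ PL t, 256 ^ t ≤ j ∧ j < 2 * 256 ^ t := by
    intro t ht j hj
    simp only [hPL, Finset.mem_image, Finset.mem_range] at hj
    obtain ⟨u, hu, rfl⟩ := hj
    exact ⟨by omega, by have := plateau_lt ht; omega⟩
  have hdisj : (Finset.Icc 1 S : Set ℕ).PairwiseDisjoint PL := by
    intro t ht t' ht' hne
    simp only [Finset.coe_Icc, Set.mem_Icc] at ht ht'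
    apply Finset.disjoint_left.mpr
    intro j hj hj'
    have b1 := hmemPL t ht.1 j hj
    have b2 := hmemPL t' ht'.1 j hj'
    have : t = t' := by
      apply block_unique ht.1 ht'.1 (m := j) <;> omega
    exact hne this
  have hsub : (Finset.Icc 1 S).biUnion PL ⊆ Finset.Icc 1 (2 * 256 ^ S) := by
    intro j hj
    simp only [Finset.mem_biUnion, Finset.mem_Icc] at hj ⊢
    obtain ⟨t, ht, hjt⟩ := hj
    have := hmemPL t ht.1 j hjt
    have hmono : 256 ^ t ≤ 256 ^ S := Nat.pow_le_pow_right (by norm_num) ht.2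
    have h1 : 1 ≤ 256 ^ t := Nat.one_le_pow _ _ (by norm_num)
    omega
  have hinner : ∀ t ∈ Finset.Icc 1 S, ∑ j ∈ PL t, f j = Real.sqrt 3 / 2 * (1/t) := by
    intro t ht
    simp only [Finset.mem_Icc] at ht
    rw [hPL]
    rw [Finset.sum_image (by intro a _ b _ h; beta_reduce at h; omega)]
    have : ∀ u ∈ Finset.range (Sf t), f (256 ^ t + 3 * u) = hf t * (Real.sqrt 3 / 2) := by
      intro u hu
      rw [Finset.mem_range] at hu
      simp only [hf_def]
      rw [E1 ht.1 hu, sin_mod_three (mod3_one ht.1 hu)]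
    rw [Finset.sum_congr rfl this, Finset.sum_const, Finset.card_range, nsmul_eq_mul]
    unfold Sf hf
    have h2 : (256:ℝ) ^ t = 256 * 256 ^ (t-1) := by exact_mod_cast pow256 ht.1
    have h3 : (0:ℝ) < 256 ^ (t-1) := by positivity
    have h4 : (0:ℝ) < t := by exact_mod_cast ht.1
    push_cast
    rw [h2]
    field_simp
    ring
  calc Real.sqrt 3 / 2 * ∑ t ∈ Finset.Icc 1 S, (1:ℝ)/t
      = ∑ t ∈ Finset.Icc 1 S, Real.sqrt 3 / 2 * (1/t) := by rw [Finset.mul_sum]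
    _ = ∑ t ∈ Finset.Icc 1 S, ∑ j ∈ PL t, f j := (Finset.sum_congr rfl hinner).symm
    _ = ∑ j ∈ (Finset.Icc 1 S).biUnion PL, f j := (Finset.sum_biUnion hdisj).symm
    _ ≤ ∑ j ∈ Finset.Icc 1 (2 * 256 ^ S), f j :=
        Finset.sum_le_sum_of_subset_of_nonneg hsub (fun j _ _ => term_nonneg hθ)


lemma rpow_add_le {x y q : ℝ} (hx : 0 ≤ x) (hy : 0 ≤ y) (hq : 0 ≤ q) (hq1 : q ≤ 1) :
    (x + y) ^ q ≤ x ^ q + y ^ q := by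
  lift x to NNReal using hx
  lift y to NNReal using hy
  have h := NNReal.rpow_add_le_add_rpow x y hq hq1
  have h2 : ((x + y : NNReal) : ℝ) ^ q = (((x + y) ^ q : NNReal) : ℝ) := by
    rw [NNReal.coe_rpow]
  rw [← NNReal.coe_add, h2, ← NNReal.coe_rpow, ← NNReal.coe_rpow, ← NNReal.coe_add]
  exact_mod_cast h

lemma half_pow (s : ℕ) : ((1:ℝ)/2) ^ s = (2:ℝ) ^ (-(s:ℝ)) := by
  rw [Real.rpow_neg (by norm_num), Real.rpow_natCast, one_div, inv_pow]

lemma norm_sub_real (x y : ℝ) : ‖(x : ℂ) - (y : ℂ)‖ = |x - y| := by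
  rw [← Complex.ofReal_sub, Complex.norm_real, Real.norm_eq_abs]



/-- half-integer-shifted b functions -/
lemma bhalf_pos : ∀ l : ℕ, (0:ℝ) < ((l:ℝ) + 1) / 2 := fun l => by positivity

lemma bhalf_tendsto : Filter.Tendsto (fun l : ℕ => ((l:ℝ) + 1) / 2) atTop atTop := by
  apply Filter.Tendsto.atTop_div_const (by norm_num)
  exact tendsto_atTop_add_const_right _ 1 tendsto_natCast_atTop_atTop

lemma bone_tendsto : Filter.Tendsto (fun l : ℕ => (l:ℝ) + 1) atTop atTop :=
  tendsto_atTop_add_const_right _ 1 tendsto_natCast_atTop_atTop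

lemma dgm_pos (hp : 1 < p) (hθ1 : 1 < θ) (hθ3 : θ ≤ 3) (hθp : θ < p) :
    DGMclass p 3 (fun j k => ((if k = 1 then aa θ j else 0 : ℝ) : ℂ)) := by
  have hp0 : 0 < p := by linarith
  have hq0 : (0:ℝ) ≤ 1/p := by positivity
  have hq1 : 1/p ≤ 1 := by
    rw [div_le_one hp0]; linarith
  -- the constant C
  have hxlt : (2:ℝ) ^ (θ/p - 1) < 1 := by
    apply Real.rpow_lt_one_of_one_lt_of_neg one_lt_two
    have : θ/p < 1 := (div_lt_one hp0).mpr hθp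
    linarith
  have hxpos : (0:ℝ) < (2:ℝ) ^ (θ/p - 1) := Real.rpow_pos_of_pos (by norm_num) _
  set x : ℝ := (2:ℝ) ^ (θ/p - 1) with hxdef
  have hxabs : |x| < 1 := by rw [abs_of_pos hxpos]; exact hxlt
  have htend : Filter.Tendsto (fun s : ℕ => (s:ℝ) * x ^ s) atTop (nhds 0) := by
    have h1 : Summable (fun s : ℕ => (s:ℝ) ^ 1 * x ^ s) :=
      summable_pow_mul_geometric_of_norm_lt_one 1 (by simpa using hxabs)
    simpa using h1.tendsto_atTop_zero
  obtain ⟨B, hB⟩ := htend.bddAbove_range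
  have hBs : ∀ s : ℕ, (s:ℝ) * x ^ s ≤ B := fun s => hB ⟨s, rfl⟩
  set K : ℝ := 2 * (4:ℝ) ^ (1/p) with hKdef
  have hK0 : 0 < K := by positivity
  set C : ℝ := 33 + max (K * B) 0 with hCdef
  have hC0 : 0 < C := by
    have := le_max_right (K * B) 0
    simp only [hCdef]; linarith
  have hhalf : ∀ s : ℕ, ((1:ℝ)/2) ^ s = (2:ℝ) ^ (-(s:ℝ)) := by
    intro s
    rw [Real.rpow_neg (by norm_num), Real.rpow_natCast, one_div, inv_pow]
  have hφ : ∀ s : ℕ, 2 * (s:ℝ) * (2 * (Gf θ s : ℝ)) ^ (1/p) * ((1:ℝ)/2) ^ s ≤ max (K * B) 0 := by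
    intro s
    have hG2 : (2:ℝ) * (Gf θ s : ℝ) ≤ (2:ℝ) ^ (θ * s + 2) := by
      have h1 : (Gf θ s : ℝ) ≤ (2:ℝ) ^ (θ * s) + 1 :=
        le_of_lt (Nat.ceil_lt_add_one (by positivity))
      have h2 : (1:ℝ) ≤ (2:ℝ) ^ (θ * s) :=
        Real.one_le_rpow one_le_two (by positivity)
      have h3 : (2:ℝ) ^ (θ * s + 2) = (2:ℝ) ^ (θ * s) * 4 := by
        rw [Real.rpow_add (by norm_num)]
        norm_num
      nlinarith
    have hstep : (2 * (Gf θ s : ℝ)) ^ (1/p) ≤ (4:ℝ) ^ (1/p) * (2:ℝ) ^ (θ * s / p) := by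
      calc (2 * (Gf θ s : ℝ)) ^ (1/p) ≤ ((2:ℝ) ^ (θ * s + 2)) ^ (1/p) :=
            Real.rpow_le_rpow (by positivity) hG2 hq0
        _ = (2:ℝ) ^ (θ * s / p) * (2:ℝ) ^ (2 * (1/p)) := by
            rw [← Real.rpow_mul (by norm_num), add_mul, Real.rpow_add (by norm_num),
              mul_one_div]
        _ = (4:ℝ) ^ (1/p) * (2:ℝ) ^ (θ * s / p) := by
            rw [mul_comm]
            congr 1
            rw [Real.rpow_mul (by norm_num)]
            norm_num
    have hxs : (2:ℝ) ^ (θ * s / p) * ((1:ℝ)/2) ^ s = x ^ s := by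
      rw [hhalf, ← Real.rpow_add (by norm_num), hxdef,
        ← Real.rpow_natCast ((2:ℝ) ^ (θ/p - 1)) s, ← Real.rpow_mul (by norm_num)]
      congr 1
      ring
    have hchain : 2 * (s:ℝ) * (2 * (Gf θ s : ℝ)) ^ (1/p) * ((1:ℝ)/2) ^ s
        ≤ K * ((s:ℝ) * x ^ s) := by
      have hhn : (0:ℝ) ≤ ((1:ℝ)/2) ^ s := by positivity
      have hsn : (0:ℝ) ≤ (s:ℝ) := Nat.cast_nonneg s
      calc 2 * (s:ℝ) * (2 * (Gf θ s : ℝ)) ^ (1/p) * ((1:ℝ)/2) ^ s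
          ≤ 2 * (s:ℝ) * ((4:ℝ) ^ (1/p) * (2:ℝ) ^ (θ * s / p)) * ((1:ℝ)/2) ^ s := by
            apply mul_le_mul_of_nonneg_right _ hhn
            apply mul_le_mul_of_nonneg_left hstep (by positivity)
        _ = K * ((s:ℝ) * ((2:ℝ) ^ (θ * s / p) * ((1:ℝ)/2) ^ s)) := by
            rw [hKdef]; ring
        _ = K * ((s:ℝ) * x ^ s) := by rw [hxs]
    refine hchain.trans ?_
    have hxB : (s:ℝ) * x ^ s ≤ B := hBs s
    have : K * ((s:ℝ) * x ^ s) ≤ K * B := by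
      apply mul_le_mul_of_nonneg_left hxB (le_of_lt hK0)
    exact this.trans (le_max_left _ _)
  -- the three conditions
  refine ⟨C, 8, (fun l => ((l:ℝ)+1)/2), (fun l => ((l:ℝ)+1)/2), (fun l => (l:ℝ)+1),
    hC0, by norm_num, bhalf_pos, bhalf_tendsto, bhalf_pos, bhalf_tendsto,
    (fun l => by positivity), bone_tendsto, ?_, ?_, ?_⟩
  · -- condition 1
    intro m n hm hn
    have hm0 : (0:ℝ) < m := by
      have : (8:ℕ) ≤ m := hm
      exact_mod_cast Nat.lt_of_lt_of_le (by norm_num) this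
    have hmr : (8:ℝ) ≤ (m:ℝ) := by exact_mod_cast hm
    by_cases hn1 : n = 1
    · subst hn1
      by_cases hjump : ∃ j₀ ∈ Finset.Icc m (2*m-1), aa θ j₀ ≠ aa θ (j₀+3)
      · obtain ⟨j₀, hj₀Icc, hj₀ne⟩ := hjump
        obtain ⟨s, hs, hj₀J⟩ := jump_mem hθ3 hj₀ne
        have loc := Jset_loc hθ3 hs hj₀J
        rw [Finset.mem_Icc] at hj₀Icc
        have h4s : 4 ≤ 256 ^ s := by
          calc 4 ≤ 256 ^ 1 := by norm_num
          _ ≤ 256 ^ s := Nat.pow_le_pow_right (by norm_num) hs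
        have hmu : m ≤ 2 * 256 ^ s - 10 := le_trans hj₀Icc.1 loc.2
        have hml : 256 ^ s ≤ 2 * m + 2 := by omega
        refine ⟨256 ^ s, ?_, ?_, ?_⟩
        · have : (m:ℝ) + 1 ≤ 2 * (256:ℝ) ^ s := by
            have : (m + 1 : ℕ) ≤ 2 * 256 ^ s := by omega
            exact_mod_cast this
          push_cast
          linarith
        · have : ((256:ℝ)) ^ s ≤ 4 * ((m:ℝ) + 1) := by
            have : (256 ^ s : ℕ) ≤ 4 * (m + 1) := by omega
            exact_mod_cast this
          push_cast
          linarith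
        · -- the main estimate
          have hL : (∑ j ∈ Finset.Icc m (2*m-1),
              ‖((if (1:ℕ) = 1 then aa θ j else 0 : ℝ) : ℂ) -
               ((if (1:ℕ) = 1 then aa θ (j+3) else 0 : ℝ) : ℂ)‖ ^ p)
              = ∑ j ∈ Finset.Icc m (2*m-1), |aa θ j - aa θ (j+3)| ^ p := by
            refine Finset.sum_congr rfl fun j _ => ?_
            rw [if_pos rfl, if_pos rfl, norm_sub_real]
          have hW : (∑ j ∈ Finset.Icc (256^s) (2*(256^s)),
              ‖((if (1:ℕ) = 1 then aa θ j else 0 : ℝ) : ℂ)‖)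
              = ∑ j ∈ Finset.Icc (256^s) (2*(256^s)), aa θ j := by
            refine Finset.sum_congr rfl fun j _ => ?_
            rw [if_pos rfl, Complex.norm_real, Real.norm_eq_abs, abs_of_nonneg aa_nonneg]
          beta_reduce
          rw [hL, hW]
          set G : ℝ := (Gf θ s : ℝ) with hGdef
          have hG1 : (1:ℝ) ≤ G := by
            rw [hGdef]; exact_mod_cast Gf_pos (θ := θ) (s := s)
          have hf0 := hf_pos hs
          have hg0 : (0:ℝ) < gf s := gf_pos
          have h1 : ∑ j ∈ Finset.Icc m (2*m-1), |aa θ j - aa θ (j+3)| ^ p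
              ≤ 2 * hf s ^ p + 2 * G * gf s ^ p :=
            le_trans (sum_Icc_le_sum_Jset hθ3 hp0 hs (Finset.mem_Icc.mpr hj₀Icc) hj₀J)
              (sum_Jset_le hθ3 hp0 hs)
          have hsum_nn : (0:ℝ) ≤ ∑ j ∈ Finset.Icc m (2*m-1), |aa θ j - aa θ (j+3)| ^ p :=
            Finset.sum_nonneg fun j _ => Real.rpow_nonneg (abs_nonneg _) _
          have h2 : (∑ j ∈ Finset.Icc m (2*m-1), |aa θ j - aa θ (j+3)| ^ p) ^ (1/p)
              ≤ (2 * hf s ^ p + 2 * G * gf s ^ p) ^ (1/p) :=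
            Real.rpow_le_rpow hsum_nn h1 hq0
          have h3 : (2 * hf s ^ p + 2 * G * gf s ^ p) ^ (1/p)
              ≤ (2 * hf s ^ p) ^ (1/p) + (2 * G * gf s ^ p) ^ (1/p) :=
            rpow_add_le (by positivity) (by positivity) hq0 hq1
          have hppow : ∀ z : ℝ, 0 < z → (z ^ p) ^ (1/p) = z := by
            intro z hz
            rw [← Real.rpow_mul (le_of_lt hz), mul_one_div, div_self (ne_of_gt hp0),
              Real.rpow_one]
          have h4 : (2 * hf s ^ p) ^ (1/p) ≤ 2 * hf s := by
            rw [Real.mul_rpow (by norm_num) (Real.rpow_nonneg (le_of_lt hf0) _),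
              hppow _ hf0]
            have : (2:ℝ) ^ (1/p) ≤ 2 := by
              calc (2:ℝ) ^ (1/p) ≤ (2:ℝ) ^ (1:ℝ) :=
                    Real.rpow_le_rpow_of_exponent_le one_le_two hq1
                _ = 2 := Real.rpow_one 2
            exact mul_le_mul_of_nonneg_right this (le_of_lt hf0)
          have h5 : (2 * G * gf s ^ p) ^ (1/p) = (2 * G) ^ (1/p) * gf s := by
            rw [Real.mul_rpow (by positivity) (Real.rpow_nonneg (le_of_lt hg0) _),
              hppow _ hg0]
          have hLHS : (∑ j ∈ Finset.Icc m (2*m-1), |aa θ j - aa θ (j+3)| ^ p) ^ (1/p)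
              ≤ 2 * hf s + (2 * G) ^ (1/p) * gf s := by
            calc _ ≤ _ := h2
              _ ≤ _ := h3
              _ ≤ 2 * hf s + (2 * G) ^ (1/p) * gf s := by rw [h5]; linarith
          -- numeric key bound
          have hsp : (0:ℝ) < s := by exact_mod_cast hs
          have h256 : (0:ℝ) < (256:ℝ) ^ s := by positivity
          have hm2 : (m:ℝ) ≤ 2 * (256:ℝ) ^ s := by
            have : (m:ℕ) ≤ 2 * 256 ^ s := by omega
            exact_mod_cast this
          have hgf256 : gf s * (256:ℝ) ^ s = ((1:ℝ)/2) ^ s := by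
            unfold gf
            rw [div_mul_eq_mul_div, one_mul, div_eq_iff (by positivity), ← mul_pow]
            norm_num
          have hkey : (2 * hf s + (2 * G) ^ (1/p) * gf s) * ((m:ℝ) * s) ≤ C := by
            have hfact : (0:ℝ) ≤ 2 * hf s + (2 * G) ^ (1/p) * gf s := by positivity
            calc (2 * hf s + (2 * G) ^ (1/p) * gf s) * ((m:ℝ) * s)
                ≤ (2 * hf s + (2 * G) ^ (1/p) * gf s) * (2 * (256:ℝ) ^ s * s) := by
                  apply mul_le_mul_of_nonneg_left _ hfact
                  apply mul_le_mul_of_nonneg_right hm2 (le_of_lt hsp)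
              _ = 32 + 2 * (s:ℝ) * (2 * G) ^ (1/p) * (gf s * (256:ℝ) ^ s) := by
                  unfold hf
                  field_simp
                  ring
              _ = 32 + 2 * (s:ℝ) * (2 * G) ^ (1/p) * ((1:ℝ)/2) ^ s := by rw [hgf256]
              _ ≤ 33 + max (K * B) 0 := by
                  have := hφ s
                  linarith
              _ = C := hCdef.symm
          have hwin := plateau_sum_le (θ := θ) hθ3 hs
          calc (∑ j ∈ Finset.Icc m (2*m-1), |aa θ j - aa θ (j+3)| ^ p) ^ (1/p)
              ≤ 2 * hf s + (2 * G) ^ (1/p) * gf s := hLHS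
            _ ≤ C / ((m:ℝ) * s) := by
                rw [le_div_iff₀ (by positivity)]
                exact hkey
            _ = C / m * (1/s) := by
                rw [div_mul_eq_div_div, div_eq_mul_one_div]
            _ ≤ C / m * ∑ j ∈ Finset.Icc (256^s) (2*(256^s)), aa θ j := by
                apply mul_le_mul_of_nonneg_left hwin
                positivity
      · -- no jump
        push_neg at hjump
        refine ⟨m, by push_cast; linarith, by push_cast; linarith, ?_⟩
        have hL : (∑ j ∈ Finset.Icc m (2*m-1),
            ‖((if (1:ℕ) = 1 then aa θ j else 0 : ℝ) : ℂ) -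
             ((if (1:ℕ) = 1 then aa θ (j+3) else 0 : ℝ) : ℂ)‖ ^ p) = 0 := by
          refine Finset.sum_eq_zero fun j hj => ?_
          rw [if_pos rfl, if_pos rfl, norm_sub_real, hjump j hj, sub_self, abs_zero,
            Real.zero_rpow (ne_of_gt hp0)]
        beta_reduce
        rw [hL, Real.zero_rpow (by positivity)]
        apply mul_nonneg (div_nonneg (le_of_lt hC0) (le_of_lt hm0))
        exact Finset.sum_nonneg fun j _ => norm_nonneg _
    · -- n ≠ 1
      refine ⟨m, by push_cast; linarith, by push_cast; linarith, ?_⟩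
      have hL : (∑ j ∈ Finset.Icc m (2*m-1),
          ‖((if n = 1 then aa θ j else 0 : ℝ) : ℂ) -
           ((if n = 1 then aa θ (j+3) else 0 : ℝ) : ℂ)‖ ^ p) = 0 := by
        refine Finset.sum_eq_zero fun j hj => ?_
        rw [if_neg hn1, if_neg hn1, sub_self, norm_zero, Real.zero_rpow (ne_of_gt hp0)]
      beta_reduce
      rw [hL, Real.zero_rpow (by positivity)]
      apply mul_nonneg (div_nonneg (le_of_lt hC0) (le_of_lt hm0))
      exact Finset.sum_nonneg fun j _ => norm_nonneg _
  · -- condition 2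
    intro m n hm hn
    have hn0 : (0:ℝ) < n := by
      have : (8:ℕ) ≤ n := hn
      exact_mod_cast Nat.lt_of_lt_of_le (by norm_num) this
    have hnr : (8:ℝ) ≤ (n:ℝ) := by exact_mod_cast hn
    refine ⟨n, by push_cast; linarith, by push_cast; linarith, ?_⟩
    have hL : (∑ k ∈ Finset.Icc n (2*n-1),
        ‖((if k = 1 then aa θ m else 0 : ℝ) : ℂ) -
         ((if k + 3 = 1 then aa θ m else 0 : ℝ) : ℂ)‖ ^ p) = 0 := by
      refine Finset.sum_eq_zero fun k hk => ?_
      rw [Finset.mem_Icc] at hk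
      have hk1 : k ≠ 1 := by omega
      have hk2 : k + 3 ≠ 1 := by omega
      rw [if_neg hk1, if_neg hk2, sub_self, norm_zero, Real.zero_rpow (ne_of_gt hp0)]
    beta_reduce
    rw [hL, Real.zero_rpow (by positivity)]
    apply mul_nonneg (div_nonneg (le_of_lt hC0) (le_of_lt hn0))
    exact Finset.sum_nonneg fun k _ => norm_nonneg _
  · -- condition 3
    intro m n hm hn S hS
    have hm0 : (0:ℝ) < m := by
      have : (8:ℕ) ≤ m := hm
      exact_mod_cast Nat.lt_of_lt_of_le (by norm_num) this
    have hn0 : (0:ℝ) < n := by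
      have : (8:ℕ) ≤ n := hn
      exact_mod_cast Nat.lt_of_lt_of_le (by norm_num) this
    have hS0 : 0 ≤ S := by
      refine le_trans ?_ (hS (m+n+1) 0 (by push_cast; linarith))
      apply Finset.sum_nonneg fun j _ => Finset.sum_nonneg fun k _ => norm_nonneg _
    have hL : (∑ j ∈ Finset.Icc m (2*m-1), ∑ k ∈ Finset.Icc n (2*n-1),
        ‖((if k = 1 then aa θ j else 0 : ℝ) : ℂ) -
         ((if k = 1 then aa θ (j+3) else 0 : ℝ) : ℂ) -
         ((if k + 3 = 1 then aa θ j else 0 : ℝ) : ℂ) +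
         ((if k + 3 = 1 then aa θ (j+3) else 0 : ℝ) : ℂ)‖ ^ p) = 0 := by
      refine Finset.sum_eq_zero fun j hj => Finset.sum_eq_zero fun k hk => ?_
      rw [Finset.mem_Icc] at hk
      have hk1 : k ≠ 1 := by omega
      have hk2 : k + 3 ≠ 1 := by omega
      rw [if_neg hk1, if_neg hk1, if_neg hk2, if_neg hk2]
      norm_num
      exact Real.zero_rpow (ne_of_gt hp0)
    beta_reduce
    rw [hL, Real.zero_rpow (by positivity)]
    apply mul_nonneg (div_nonneg (le_of_lt hC0) (by positivity)) hS0

lemma dgm_neg (hθ1 : 1 < θ) (hθ3 : θ ≤ 3) :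
    ¬ DGMclass 1 3 (fun j k => ((if k = 1 then aa θ j else 0 : ℝ) : ℂ)) := by
  rintro ⟨C, lam, b₁, b₂, b₃, hC, hlam, hb1p, -, -, -, -, -, h1, -, -⟩
  have hx2 : (1:ℝ) < (2:ℝ) ^ (θ - 1) := by
    rw [show (1:ℝ) = (2:ℝ) ^ (0:ℝ) by rw [Real.rpow_zero]]
    exact Real.rpow_lt_rpow_of_exponent_lt one_lt_two (by linarith)
  have htop := tendsto_pow_atTop_atTop_of_one_lt hx2
  obtain ⟨s, hsgt, hsge⟩ :=
    ((htop.eventually_gt_atTop (33 * C)).and (eventually_ge_atTop (max 1 lam))).exists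
  have hs1 : 1 ≤ s := le_trans (le_max_left _ _) hsge
  have hslam : lam ≤ s := le_trans (le_max_right _ _) hsge
  set m := 256 ^ s with hmdef
  have hmlam : lam ≤ m := by
    calc lam ≤ s := hslam
    _ ≤ 256 ^ s := le_of_lt (Nat.lt_pow_self (n := s) (by norm_num))
  obtain ⟨M, hM1, hM2, hineq⟩ := h1 m 1 hmlam le_rfl
  have hM0 : 1 ≤ M := by
    by_contra h
    push_neg at h
    interval_cases M
    · have := hb1p m
      simp only [Nat.cast_zero] at hM1
      linarith
  -- rewrite hineq
  have hr := room (θ := θ) hθ3 hs1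
  have h4s : 4 ≤ 256 ^ s := by
    calc 4 ≤ 256 ^ 1 := by norm_num
    _ ≤ 256 ^ s := Nat.pow_le_pow_right (by norm_num) hs1
  have hL0 : ∑ j ∈ Finset.Icc m (2*m-1),
      ‖((if (1:ℕ) = 1 then aa θ j else 0 : ℝ) : ℂ) -
       ((if (1:ℕ) = 1 then aa θ (j+3) else 0 : ℝ) : ℂ)‖ ^ (1:ℝ)
      = ∑ j ∈ Finset.Icc m (2*m-1), |aa θ j - aa θ (j+3)| := by
    refine Finset.sum_congr rfl fun j _ => ?_
    rw [if_pos rfl, if_pos rfl, norm_sub_real, Real.rpow_one]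
  have hW0 : ∑ j ∈ Finset.Icc M (2*M),
      ‖((if (1:ℕ) = 1 then aa θ j else 0 : ℝ) : ℂ)‖
      = ∑ j ∈ Finset.Icc M (2*M), aa θ j := by
    refine Finset.sum_congr rfl fun j _ => ?_
    rw [if_pos rfl, Complex.norm_real, Real.norm_eq_abs, abs_of_nonneg aa_nonneg]
  beta_reduce at hineq
  rw [hL0, hW0, one_div_one, Real.rpow_one] at hineq
  -- lower bound for the sum of differences
  have hDsub : (Finset.range (Gf θ s)).image (fun u => Ef s + 6 * u)
      ⊆ Finset.Icc m (2*m-1) := by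
    intro j hj
    simp only [Finset.mem_image, Finset.mem_range] at hj
    obtain ⟨u, hu, rfl⟩ := hj
    have hE : Ef s = 256 ^ s + 3 * Sf s + 6 := rfl
    simp only [Finset.mem_Icc]
    omega
  have hDsum : ∑ j ∈ (Finset.range (Gf θ s)).image (fun u => Ef s + 6 * u),
      |aa θ j - aa θ (j+3)| = (Gf θ s : ℝ) * gf s := by
    rw [Finset.sum_image (by intro a _ b _ h; beta_reduce at h; omega)]
    have : ∀ u ∈ Finset.range (Gf θ s),
        |aa θ (Ef s + 6 * u) - aa θ (Ef s + 6 * u + 3)| = gf s := by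
      intro u hu
      rw [Finset.mem_range] at hu
      rw [E2 hθ3 hs1 hu, aa_dset_succ_zero hθ3 hs1 hu, sub_zero,
        abs_of_nonneg (le_of_lt gf_pos)]
    rw [Finset.sum_congr rfl this, Finset.sum_const, Finset.card_range, nsmul_eq_mul]
  have hlow : (Gf θ s : ℝ) * gf s ≤ ∑ j ∈ Finset.Icc m (2*m-1), |aa θ j - aa θ (j+3)| := by
    rw [← hDsum]
    exact Finset.sum_le_sum_of_subset_of_nonneg hDsub (fun j _ _ => abs_nonneg _)
  have hwin := window_le (θ := θ) hθ3 hM0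
  have hm0 : (0:ℝ) < (m:ℝ) := by
    have : 0 < m := by omega
    exact_mod_cast this
  have hfinal : (Gf θ s : ℝ) * gf s * m ≤ 33 * C := by
    have step : (Gf θ s : ℝ) * gf s ≤ C / m * 33 := by
      calc (Gf θ s : ℝ) * gf s ≤ ∑ j ∈ Finset.Icc m (2*m-1), |aa θ j - aa θ (j+3)| := hlow
        _ ≤ C / m * ∑ j ∈ Finset.Icc M (2*M), aa θ j := hineq
        _ ≤ C / m * 33 := by
            apply mul_le_mul_of_nonneg_left hwin
            positivity
    calc (Gf θ s : ℝ) * gf s * m ≤ (C / m * 33) * m :=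
          mul_le_mul_of_nonneg_right step (le_of_lt hm0)
      _ = 33 * C := by field_simp
  -- but the left side is at least (2^(θ-1))^s > 33 C
  have hgm : gf s * (m:ℝ) = ((1:ℝ)/2) ^ s := by
    have : ((m:ℕ):ℝ) = (256:ℝ)^s := by rw [hmdef]; push_cast; ring
    rw [this]
    unfold gf
    rw [div_mul_eq_mul_div, one_mul, div_eq_iff (by positivity), ← mul_pow]
    norm_num
  have hge : ((2:ℝ) ^ (θ - 1)) ^ s ≤ (Gf θ s : ℝ) * gf s * m := by
    have h1 : ((2:ℝ) ^ (θ - 1)) ^ s = (2:ℝ) ^ (θ * s) * ((1:ℝ)/2) ^ s := by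
      rw [half_pow s, ← Real.rpow_natCast ((2:ℝ) ^ (θ - 1)) s, ← Real.rpow_mul (by norm_num),
        ← Real.rpow_add (by norm_num)]
      congr 1
      ring
    rw [h1, mul_assoc, hgm]
    apply mul_le_mul_of_nonneg_right (Gf_ge (θ := θ) (s := s)) (by positivity)
  linarith [hsgt, hge.trans hfinal]

lemma small_terms (hθ3 : θ ≤ 3) {ε : ℝ} (hε : 0 < ε) :
    ∃ m₀ : ℕ, ∀ j k : ℕ, m₀ < j + k →
      (j : ℝ) * k * |if k = 1 then aa θ j else 0| < ε := by
  obtain ⟨s₁, hs₁⟩ := exists_nat_gt (16/ε)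
  refine ⟨256 ^ (s₁ + 1), ?_⟩
  intro j k hjk
  by_cases hk : k = 1
  · subst hk
    rw [if_pos rfl, abs_of_nonneg aa_nonneg]
    by_cases ha : aa θ j = 0
    · rw [ha]; simpa using hε
    · obtain ⟨s, hs, hj1, hj2, -, hv⟩ := range_of_ne hθ3 ha
      have hsT : s₁ + 1 ≤ s := by
        have h1 : 256 ^ (s₁ + 1) ≤ j := by omega
        have h2 : j < 256 ^ (s + 1) := by
          calc j < 2 * 256 ^ s := hj2
          _ ≤ 256 ^ (s+1) := by rw [pow_succ]; omega
        have := h1.trans_lt h2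
        have := (Nat.pow_lt_pow_iff_right (a := 256) (by norm_num)).mp this
        omega
      have hsp : (0:ℝ) < s := by exact_mod_cast hs
      have h256 : (0:ℝ) < (256:ℝ) ^ s := by positivity
      have hjr : (j:ℝ) < 2 * (256:ℝ) ^ s := by exact_mod_cast hj2
      have hja : (j:ℝ) * aa θ j ≤ 16 / s := by
        calc (j:ℝ) * aa θ j ≤ (2 * (256:ℝ) ^ s) * hf s := by
              apply mul_le_mul (le_of_lt hjr) hv aa_nonneg (by positivity)
          _ = 16 / s := by
              unfold hf
              field_simp
              ring
      have h16 : 16 / (s:ℝ) ≤ 16 / (s₁ + 1 : ℝ) := by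
        apply div_le_div_of_nonneg_left (by norm_num) (by positivity)
        exact_mod_cast hsT
      have hεs : 16 / ((s₁:ℝ) + 1) < ε := by
        rw [div_lt_iff₀ (by positivity)]
        rw [div_lt_iff₀ hε] at hs₁
        nlinarith
      push_cast
      calc (j:ℝ) * 1 * aa θ j = (j:ℝ) * aa θ j := by ring
        _ ≤ 16 / s := hja
        _ ≤ 16 / ((s₁:ℝ) + 1) := by push_cast at h16 ⊢; linarith
        _ < ε := hεs
  · rw [if_neg hk, abs_zero, mul_zero]
    exact hε

lemma diverge (hθ3 : θ ≤ 3) :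
    ¬ ∃ L : ℝ, Filter.Tendsto
        (fun mn : ℕ × ℕ => ∑ j ∈ Finset.Icc 1 mn.1, ∑ k ∈ Finset.Icc 1 mn.2,
          (if k = 1 then aa θ j else 0) * Real.sin (j * (2 * Real.pi / 3)) *
            Real.sin (k * (Real.pi / 2)))
        atTop (nhds L) := by
  rintro ⟨L, hL⟩
  have hsp : ∀ s : ℕ, s < 256 ^ s := fun s => Nat.lt_pow_self (n := s) (by norm_num)
  have hmono : ∀ s : ℕ, s ≤ 2 * 256 ^ s := fun s => by have := hsp s; omega
  have hg1 : Filter.Tendsto (fun s : ℕ => 2 * 256 ^ s) atTop atTop :=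
    tendsto_atTop_mono hmono tendsto_id
  have hg : Filter.Tendsto (fun s : ℕ => ((2 * 256 ^ s : ℕ), s)) atTop
      (atTop : Filter (ℕ × ℕ)) := by
    rw [← Filter.prod_atTop_atTop_eq]
    exact Filter.Tendsto.prodMk hg1 tendsto_id
  have hcomp := hL.comp hg
  have hupper := hcomp.eventually_lt_const (lt_add_one L)
  -- harmonic lower bound
  have hre : ∀ s : ℕ, ∑ t ∈ Finset.Icc 1 s, (1:ℝ)/t = ∑ i ∈ Finset.range s, 1/((i:ℝ)+1) := by
    intro s
    rw [← Finset.Ico_add_one_right_eq_Icc, Finset.sum_Ico_eq_sum_range]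
    rw [show s + 1 - 1 = s by omega]
    refine Finset.sum_congr rfl fun i _ => ?_
    push_cast
    rw [add_comm]
  have hH : Filter.Tendsto (fun s : ℕ => Real.sqrt 3 / 2 * ∑ t ∈ Finset.Icc 1 s, (1:ℝ)/t)
      atTop atTop := by
    apply Filter.Tendsto.const_mul_atTop (by positivity)
    simp only [hre]
    exact Real.tendsto_sum_range_one_div_nat_succ_atTop
  have hev2 := hH.eventually_gt_atTop (L + 1)
  obtain ⟨s, hup, hlo, hs1⟩ := (hupper.and (hev2.and (eventually_ge_atTop 1))).exists
  -- evaluate the double sum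
  have hinner : ∀ j : ℕ, ∑ k ∈ Finset.Icc 1 s,
      (if k = 1 then aa θ j else 0) * Real.sin (j * (2 * Real.pi / 3)) *
        Real.sin (k * (Real.pi / 2))
      = aa θ j * Real.sin (j * (2 * Real.pi / 3)) := by
    intro j
    rw [Finset.sum_eq_single_of_mem 1 (Finset.mem_Icc.mpr ⟨le_rfl, hs1⟩)]
    · rw [if_pos rfl, Nat.cast_one, one_mul, Real.sin_pi_div_two, mul_one]
    · intro b _ hb
      rw [if_neg hb, zero_mul, zero_mul]
  have hFval : (fun mn : ℕ × ℕ => ∑ j ∈ Finset.Icc 1 mn.1, ∑ k ∈ Finset.Icc 1 mn.2,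
      (if k = 1 then aa θ j else 0) * Real.sin (j * (2 * Real.pi / 3)) *
        Real.sin (k * (Real.pi / 2))) ((2 * 256 ^ s : ℕ), s)
      = ∑ j ∈ Finset.Icc 1 (2 * 256 ^ s), aa θ j * Real.sin (j * (2 * Real.pi / 3)) :=
    Finset.sum_congr rfl fun j _ => hinner j
  have husum := Usum_ge (θ := θ) hθ3 hs1
  have : L + 1 < L + 1 := by
    calc L + 1 < Real.sqrt 3 / 2 * ∑ t ∈ Finset.Icc 1 s, (1:ℝ)/t := hlo
      _ ≤ ∑ j ∈ Finset.Icc 1 (2 * 256 ^ s), aa θ j * Real.sin (j * (2 * Real.pi / 3)) := husum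
      _ < L + 1 := by rw [← hFval]; exact hup
  exact absurd this (lt_irrefl _)

end DGMaux

theorem statement1 (p : ℝ) (hp : 1 < p) :
    ∃ (x₀ y₀ : ℝ) (c : ℕ → ℕ → ℝ),
      DGMclass p 3 (fun j k => (c j k : ℂ)) ∧
      (∀ ε : ℝ, 0 < ε → ∃ m₀ : ℕ, ∀ j k : ℕ, m₀ < j + k →
        (j : ℝ) * k * |c j k| < ε) ∧
      ¬ DGMclass 1 3 (fun j k => (c j k : ℂ)) ∧
      ¬ ∃ L : ℝ, Filter.Tendsto
          (fun mn : ℕ × ℕ => ∑ j ∈ Finset.Icc 1 mn.1, ∑ k ∈ Finset.Icc 1 mn.2,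
            c j k * Real.sin (j * x₀) * Real.sin (k * y₀))
          Filter.atTop (nhds L) := by
  have hθ1 : 1 < min ((p+1)/2) 3 := lt_min (by linarith) (by norm_num)
  have hθ3 : min ((p+1)/2) 3 ≤ 3 := min_le_right _ _
  have hθp : min ((p+1)/2) 3 < p := lt_of_le_of_lt (min_le_left _ _) (by linarith)
  refine ⟨2 * Real.pi / 3, Real.pi / 2,
    fun j k => if k = 1 then DGMaux.aa (min ((p+1)/2) 3) j else 0, ?_, ?_, ?_, ?_⟩
  · exact DGMaux.dgm_pos hp hθ1 hθ3 hθp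
  · intro ε hε
    obtain ⟨m₀, h⟩ := DGMaux.small_terms hθ3 hε
    exact ⟨m₀, fun j k hk => h j k hk⟩
  · exact DGMaux.dgm_neg hθ1 hθ3
  · exact DGMaux.diverge hθ3

end
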